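/- arXiv:1111.2467 — 4 statements merged into one kernel-verified Lean document; each statement's English description precedes it below -/
import Mathlib

section
/- Let f : ℝ → ℂ be an almost periodic function (i.e., f belongs to the closure, in the Banach space of bounded continuous functions ℝ → ℂ with the supremum norm, of the linear span of the functions y ↦ exp(iλy), λ ∈ ℝ). If f(y) → 0 as y → +∞ and as y → −∞, then f is identically zero. -/
/-!
Every almost periodic function `f` has `ε`-almost periods `t` beyond any bound, i.e.
`dist (f (y + t)) (f y) ≤ ε` for all `y`. For a trigonometric polynomial with frequencies `Λ`
this is the recurrence of the point `(exp (I * λ * T))_{λ ∈ Λ}` of the compact group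
`Λ → Circle` under taking powers, and the property survives uniform limits. Taking such a
`t` with `y + t` far out, where `f` is small, shows that `f y` is small.
-/

/-- The set of almost periodic functions: the closure, in the Banach space of
bounded continuous functions `ℝ → ℂ` with the sup norm, of the linear span of
the functions `y ↦ exp (I * λ * y)`, `λ ∈ ℝ`. -/
def AlmostPeriodic : Set (BoundedContinuousFunction ℝ ℂ) :=
  closure (Submodule.span ℂ
    {g : BoundedContinuousFunction ℝ ℂ |
      ∃ lam : ℝ, ∀ y : ℝ, g y = Complex.exp (Complex.I * lam * y)} : Set (BoundedContinuousFunction ℝ ℂ))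

open Complex Filter Topology

theorem exists_pow_mem_of_mem_nhds_one {G : Type*} [Group G] [TopologicalSpace G]
    [IsTopologicalGroup G] [CompactSpace G] (g : G) {U : Set G} (hU : U ∈ 𝓝 1) :
    ∃ n : ℕ, 0 < n ∧ g ^ n ∈ U := by
  -- Two powers `g ^ a`, `g ^ b` close to a cluster point `x` of `n ↦ g ^ n` have their
  -- quotient `g ^ (b - a)` close to `1`.
  obtain ⟨V, hV, hVU⟩ := exists_nhds_split_inv hU
  obtain ⟨x, hx⟩ := exists_clusterPt_of_compactSpace (map (g ^ ·) atTop)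
  have hfreq : ∃ᶠ n in atTop, g ^ n * x⁻¹ ∈ V := by
    refine MapClusterPt.frequently (p := fun z ↦ z * x⁻¹ ∈ V) hx ?_
    have : Tendsto (· * x⁻¹) (𝓝 x) (𝓝 1) := by
      simpa using (continuous_mul_const x⁻¹).tendsto x
    exact this hV
  obtain ⟨a, ha⟩ := hfreq.exists
  obtain ⟨b, hb, hab⟩ := (hfreq.and_eventually (eventually_gt_atTop a)).exists
  refine ⟨b - a, by omega, ?_⟩
  simpa [pow_sub g hab.le, mul_assoc, div_eq_mul_inv] using hVU _ hb _ ha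

theorem exp_I_mul_mul_eq_circleExp (lam y : ℝ) :
    exp (I * lam * y) = Circle.exp (lam * y) := by
  rw [Circle.coe_exp]; push_cast; ring_nf

theorem norm_exp_I_mul_mul (lam y : ℝ) : ‖exp (I * lam * y)‖ = 1 := by
  rw [exp_I_mul_mul_eq_circleExp, Circle.norm_coe]

theorem exists_ge_sum_norm_exp_sub_one_lt (Λ : Finset ℝ) (T : ℝ) {δ : ℝ} (hδ : 0 < δ) :
    ∃ t ≥ T, ∑ lam ∈ Λ, ‖exp (I * lam * t) - 1‖ < δ := by
  set U : Set (Λ → Circle) := {z | ∑ lam, ‖(z lam : ℂ) - 1‖ < δ}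
  have hU : U ∈ 𝓝 1 :=
    (isOpen_lt (by fun_prop) continuous_const).mem_nhds (by simpa [U] using hδ)
  set T' := max T 1
  obtain ⟨n, hn, hnU⟩ := exists_pow_mem_of_mem_nhds_one (fun lam : Λ ↦ Circle.exp (lam * T')) hU
  refine ⟨n * T', ?_, ?_⟩
  · have : (1 : ℝ) ≤ n := by exact_mod_cast hn
    nlinarith [le_max_left T 1, le_max_right T 1]
  · rw [← Finset.sum_coe_sort]
    simp only [U, Set.mem_ofPred_eq, Pi.pow_apply, ← Circle.exp_natCast_mul] at hnU
    convert hnU using 4 with lam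
    rw [exp_I_mul_mul_eq_circleExp]
    push_cast
    ring_nf

noncomputable def trigPolynomials : Submodule ℂ (BoundedContinuousFunction ℝ ℂ) :=
  Submodule.span ℂ {g | ∃ lam : ℝ, ∀ y : ℝ, g y = exp (I * lam * y)}

theorem exists_norm_sub_le_sum_norm_exp_sub_one {g : BoundedContinuousFunction ℝ ℂ}
    (hg : g ∈ trigPolynomials) :
    ∃ Λ : Finset ℝ, ∃ C ≥ 0, ∀ t y : ℝ,
      ‖g (y + t) - g y‖ ≤ C * ∑ lam ∈ Λ, ‖exp (I * lam * t) - 1‖ := by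
  induction hg using Submodule.span_induction with
  | mem g hg =>
    obtain ⟨lam, hlam⟩ := hg
    refine ⟨{lam}, 1, zero_le_one, fun t y ↦ ?_⟩
    have : g (y + t) - g y = exp (I * lam * y) * (exp (I * lam * t) - 1) := by
      rw [hlam, hlam, mul_sub, mul_one, ← Complex.exp_add]
      push_cast
      ring_nf
    simp [this, norm_exp_I_mul_mul]
  | zero => exact ⟨∅, 0, le_rfl, by simp⟩
  | add g₁ g₂ _ _ h₁ h₂ =>
    obtain ⟨Λ₁, C₁, hC₁, h₁⟩ := h₁
    obtain ⟨Λ₂, C₂, hC₂, h₂⟩ := h₂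
    refine ⟨Λ₁ ∪ Λ₂, C₁ + C₂, add_nonneg hC₁ hC₂, fun t y ↦ ?_⟩
    calc ‖(g₁ + g₂) (y + t) - (g₁ + g₂) y‖
        ≤ ‖g₁ (y + t) - g₁ y‖ + ‖g₂ (y + t) - g₂ y‖ := by
          simpa only [BoundedContinuousFunction.coe_add, Pi.add_apply, add_sub_add_comm]
            using norm_add_le _ _
      _ ≤ C₁ * ∑ lam ∈ Λ₁ ∪ Λ₂, ‖exp (I * lam * t) - 1‖
          + C₂ * ∑ lam ∈ Λ₁ ∪ Λ₂, ‖exp (I * lam * t) - 1‖ := by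
          gcongr
          · exact (h₁ t y).trans (by gcongr; exact Finset.subset_union_left)
          · exact (h₂ t y).trans (by gcongr; exact Finset.subset_union_right)
      _ = _ := by ring
  | smul c g _ h =>
    obtain ⟨Λ, C, hC, h⟩ := h
    refine ⟨Λ, ‖c‖ * C, by positivity, fun t y ↦ ?_⟩
    simpa [← mul_sub, mul_assoc] using mul_le_mul_of_nonneg_left (h t y) (norm_nonneg c)

def HasUnboundedAlmostPeriods {X : Type*} [PseudoMetricSpace X] (f : ℝ → X) : Prop :=
  ∀ ε > 0, ∀ T : ℝ, ∃ t ≥ T, ∀ y, dist (f (y + t)) (f y) ≤ ε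

theorem hasUnboundedAlmostPeriods_of_mem_trigPolynomials {g : BoundedContinuousFunction ℝ ℂ}
    (hg : g ∈ trigPolynomials) :
    HasUnboundedAlmostPeriods g := by
  intro ε hε T
  obtain ⟨Λ, C, hC, hg⟩ := exists_norm_sub_le_sum_norm_exp_sub_one hg
  obtain ⟨t, hTt, ht⟩ :=
    exists_ge_sum_norm_exp_sub_one_lt Λ T (div_pos hε (by positivity : 0 < C + 1))
  refine ⟨t, hTt, fun y ↦ ?_⟩
  calc dist (g (y + t)) (g y) ≤ C * ∑ lam ∈ Λ, ‖exp (I * lam * t) - 1‖ := by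
        simpa [dist_eq_norm] using hg t y
    _ ≤ C * (ε / (C + 1)) := by gcongr
    _ ≤ ε := by
        rw [mul_div_assoc', div_le_iff₀ (by positivity)]
        nlinarith

theorem BoundedContinuousFunction.isClosed_setOf_hasUnboundedAlmostPeriods
    {X : Type*} [PseudoMetricSpace X] :
    IsClosed {f : BoundedContinuousFunction ℝ X | HasUnboundedAlmostPeriods f} := by
  refine isClosed_of_closure_subset fun f hf ε hε T ↦ ?_
  obtain ⟨g, hg, hfg⟩ := Metric.mem_closure_iff.1 hf (ε / 3) (by positivity)
  obtain ⟨t, hTt, ht⟩ := hg (ε / 3) (by positivity) T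
  refine ⟨t, hTt, fun y ↦ ?_⟩
  calc dist (f (y + t)) (f y)
      ≤ dist (f (y + t)) (g (y + t)) + dist (g (y + t)) (g y) + dist (g y) (f y) :=
        dist_triangle4 _ _ _ _
    _ ≤ ε / 3 + ε / 3 + ε / 3 := by
        gcongr
        · exact (dist_coe_le_dist _).trans hfg.le
        · exact ht y
        · exact (dist_coe_le_dist _).trans (dist_comm f g ▸ hfg.le)
    _ = ε := by ring

theorem HasUnboundedAlmostPeriods.eq_of_tendsto_atTop {X : Type*} [MetricSpace X] {f : ℝ → X}
    (hf : HasUnboundedAlmostPeriods f) {a : X} (hlim : Tendsto f atTop (𝓝 a)) (y : ℝ) :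
    f y = a := by
  refine eq_of_forall_dist_le fun ε hε ↦ ?_
  obtain ⟨M, hM⟩ := eventually_atTop.1 (Metric.tendsto_nhds.1 hlim (ε / 2) (by positivity))
  obtain ⟨t, hMt, ht⟩ := hf (ε / 2) (by positivity) (M - y)
  calc dist (f y) a ≤ dist (f y) (f (y + t)) + dist (f (y + t)) a := dist_triangle _ _ _
    _ ≤ ε / 2 + ε / 2 := by
        gcongr
        · exact dist_comm (f y) _ ▸ ht y
        · exact (hM _ (by linarith)).le
    _ = ε := add_halves ε

theorem stmt_0_general (f : BoundedContinuousFunction ℝ ℂ)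
    (hf : f ∈ AlmostPeriodic)
    (htop : Filter.Tendsto f Filter.atTop (nhds 0)) :
    ∀ y : ℝ, f y = 0 :=
  have hperiods : HasUnboundedAlmostPeriods f :=
    BoundedContinuousFunction.isClosed_setOf_hasUnboundedAlmostPeriods.closure_subset_iff.2
      (fun _ ↦ hasUnboundedAlmostPeriods_of_mem_trigPolynomials) hf
  hperiods.eq_of_tendsto_atTop htop

theorem stmt_0 (f : BoundedContinuousFunction ℝ ℂ)
    (hf : f ∈ AlmostPeriodic)
    (htop : Filter.Tendsto f Filter.atTop (nhds 0))
    (hbot : Filter.Tendsto f Filter.atBot (nhds 0)) :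
    ∀ y : ℝ, f y = 0 :=
  stmt_0_general f hf htop
end

section
/- Let f_a ∈ L¹(ℝ, ℂ), let (f_k)_{k ∈ ℤ} be an absolutely summable family of complex numbers, and let (t_k)_{k ∈ ℤ} be real numbers. Then the series g = ∑_{k ∈ ℤ} f_k · f_a(· − t_k) converges absolutely in L¹(ℝ, ℂ), and for every y ∈ ℝ the Fourier transform of g satisfies ĝ(y) = f̂_a(y) · ∑_{k ∈ ℤ} f_k e^{−i y t_k}, where f̂_a(y) = ∫_ℝ e^{−iyt} f_a(t) dt. (This expresses that the Fourier transforms of L¹ functions form an ideal in the algebra 𝒜 of sums of such transforms and almost periodic exponential series.) -/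
/-!
The translates `f k * fa (· - t k)` have `L¹` norms `‖f k‖ * ‖fa‖₁`, so the series converges
absolutely in the Banach space `L¹`. Integration against the bounded kernel `x ↦ e^{-iyx}` is
continuous on `L¹`, hence commutes with the sum, and it turns translation by `t k` into
multiplication by `e^{-iy t k}`.
-/

open MeasureTheory Filter Topology Complex

section L1Series

variable {α ι : Type*} [MeasurableSpace α] {μ : Measure α}

theorem exists_integrable_tendsto_integral_norm_sub_finsetSum {E : Type*}
    [NormedAddCommGroup E] [CompleteSpace E] {F : ι → α → E} (hF : ∀ i, Integrable (F i) μ)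
    (hsum : Summable fun i => ∫ x, ‖F i x‖ ∂μ) :
    ∃ g : α → E, Integrable g μ ∧
      Tendsto (fun s : Finset ι => ∫ x, ‖g x - ∑ i ∈ s, F i x‖ ∂μ) atTop (𝓝 0) := by
  let T : ι → α →₁[μ] E := fun i => (hF i).toL1 (F i)
  have hT : Summable T :=
    .of_norm (by simpa only [T, L1.norm_of_fun_eq_integral_norm] using hsum)
  let G : α →₁[μ] E := ∑' i, T i
  refine ⟨G, L1.integrable_coeFn G, ?_⟩
  have hdist : ∀ s : Finset ι, ∫ x, ‖G x - ∑ i ∈ s, F i x‖ ∂μ = ‖∑ i ∈ s, T i - G‖ := by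
    intro s
    have hTF : ∀ᵐ x ∂μ, ∀ i ∈ s, T i x = F i x :=
      (eventually_all_finset s).2 fun i _ => (hF i).coeFn_toL1
    rw [norm_sub_rev, L1.norm_eq_integral_norm]
    refine integral_congr_ae ?_
    filter_upwards [Lp.coeFn_sub G (∑ i ∈ s, T i), Lp.coeFn_fun_finsetSum s T, hTF]
      with x hsub hpart hTF
    rw [hsub, Pi.sub_apply, hpart, Finset.sum_congr rfl hTF]
  simp_rw [hdist]
  exact tendsto_iff_norm_sub_tendsto_zero.1 hT.hasSum

theorem hasSum_integral_mul_of_tendsto_integral_norm_sub {𝕜 : Type*} [RCLike 𝕜]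
    {F : ι → α → 𝕜} {g e : α → 𝕜} {C : ℝ} (hF : ∀ i, Integrable (F i) μ) (hg : Integrable g μ)
    (he : AEStronglyMeasurable e μ) (heC : ∀ᵐ x ∂μ, ‖e x‖ ≤ C)
    (hlim : Tendsto (fun s : Finset ι => ∫ x, ‖g x - ∑ i ∈ s, F i x‖ ∂μ) atTop (𝓝 0)) :
    HasSum (fun i => ∫ x, e x * F i x ∂μ) (∫ x, e x * g x ∂μ) := by
  have hbound : ∀ s : Finset ι, ‖∑ i ∈ s, ∫ x, e x * F i x ∂μ - ∫ x, e x * g x ∂μ‖ ≤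
      C * ∫ x, ‖g x - ∑ i ∈ s, F i x‖ ∂μ := by
    intro s
    have heF : ∀ i ∈ s, Integrable (fun x => e x * F i x) μ := fun i _ => (hF i).bdd_mul he heC
    have hS : Integrable (fun x => ∑ i ∈ s, F i x) μ := integrable_finsetSum s fun i _ => hF i
    rw [← integral_finsetSum s heF, ← integral_sub (integrable_finsetSum s heF)
      (hg.bdd_mul he heC), ← integral_const_mul]
    refine norm_integral_le_of_norm_le ((hg.sub hS).norm.const_mul C) ?_
    filter_upwards [heC] with x hx
    rw [← Finset.mul_sum, ← mul_sub, norm_mul, norm_sub_rev]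
    gcongr
  exact tendsto_iff_norm_sub_tendsto_zero.2 <|
    squeeze_zero (fun _ => norm_nonneg _) hbound (by simpa using hlim.const_mul C)

end L1Series

theorem integral_cexp_mul_comp_sub (φ : ℝ → ℂ) (y τ : ℝ) :
    ∫ x : ℝ, cexp (-(I * y * x)) * φ (x - τ) =
      cexp (-(I * y * τ)) * ∫ x : ℝ, cexp (-(I * y * x)) * φ x := by
  rw [← integral_add_right_eq_self _ τ, ← integral_const_mul]
  congr 1
  ext x
  rw [add_sub_cancel_right, ← mul_assoc, ← Complex.exp_add]
  congr 2
  push_cast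
  ring

theorem stmt_2 (fa : ℝ → ℂ) (hfa : Integrable fa (volume : Measure ℝ))
    (f : ℤ → ℂ) (hf : Summable fun k : ℤ => ‖f k‖) (t : ℤ → ℝ) :
    ∃ g : ℝ → ℂ, Integrable g (volume : Measure ℝ) ∧
      -- absolute convergence of the series in L¹:
      (Summable fun k : ℤ => ∫ x : ℝ, ‖f k * fa (x - t k)‖) ∧
      -- the partial sums converge to g in the L¹ norm:
      Filter.Tendsto
        (fun s : Finset ℤ => ∫ x : ℝ, ‖g x - ∑ k ∈ s, f k * fa (x - t k)‖)
        Filter.atTop (nhds 0) ∧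
      -- the Fourier transform of g is f̂ₐ times the almost periodic series:
      ∀ y : ℝ,
        (∫ x : ℝ, Complex.exp (-(Complex.I * y * x)) * g x) =
          (∫ x : ℝ, Complex.exp (-(Complex.I * y * x)) * fa x) *
            ∑' k : ℤ, f k * Complex.exp (-(Complex.I * y * t k)) := by
  have hF : ∀ k, Integrable (fun x => f k * fa (x - t k)) :=
    fun k => (hfa.comp_sub_right (t k)).const_mul (f k)
  have hsum : Summable fun k : ℤ => ∫ x : ℝ, ‖f k * fa (x - t k)‖ := by
    simpa only [norm_mul, integral_const_mul, integral_sub_right_eq_self fun x => ‖fa x‖]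
      using hf.mul_right (∫ x, ‖fa x‖)
  obtain ⟨g, hg, hlim⟩ := exists_integrable_tendsto_integral_norm_sub_finsetSum hF hsum
  refine ⟨g, hg, hsum, hlim, fun y => ?_⟩
  have he : AEStronglyMeasurable (fun x : ℝ => cexp (-(I * y * x))) volume := by fun_prop
  have he1 : ∀ᵐ x : ℝ, ‖cexp (-(I * y * x))‖ ≤ 1 :=
    ae_of_all _ fun x => by rw [Complex.norm_exp]; simp
  rw [← (hasSum_integral_mul_of_tendsto_integral_norm_sub hF hg he he1 hlim).tsum_eq,
    ← tsum_mul_left]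
  congr 1
  ext k
  simp only [mul_left_comm _ (f k), integral_const_mul, integral_cexp_mul_comp_sub]
  ring
end

section
/- Let S be a set and let n₁, d₁, n₂, d₂ : S → ℂ be functions such that |n₂(x)|² + |d₂(x)|² = 1 for all x ∈ S. Then for every function q : S → ℂ, sup_{x ∈ S} √(|n₁(x) − n₂(x)q(x)|² + |d₁(x) − d₂(x)q(x)|²) ≥ sup_{x ∈ S} |n₂(x)·d₁(x) − d₂(x)·n₁(x)| (as an inequality in [0, ∞], i.e., using extended-real suprema or assuming all functions are bounded). -/
/-! Pointwise, `n₂ d₁ - d₂ n₁ = n₂ (d₁ - d₂ q) - d₂ (n₁ - n₂ q)` for every `q`, and by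
Cauchy–Schwarz the right-hand side is bounded by `‖(n₂, d₂)‖ · ‖(n₁, d₁) - (n₂, d₂) q‖`, where
the first factor is `1`. Taking suprema gives the inequality. -/

lemma norm_mul_sub_mul_le_sqrt_mul_sqrt {R : Type*} [NonUnitalSeminormedRing R] (c d u v : R) :
    ‖c * u - d * v‖ ≤ √(‖c‖ ^ 2 + ‖d‖ ^ 2) * √(‖u‖ ^ 2 + ‖v‖ ^ 2) :=
  calc ‖c * u - d * v‖ ≤ ‖c‖ * ‖u‖ + ‖d‖ * ‖v‖ :=
        (norm_sub_le _ _).trans (add_le_add (norm_mul_le _ _) (norm_mul_le _ _))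
    _ ≤ √(‖c‖ ^ 2 + ‖d‖ ^ 2) * √(‖u‖ ^ 2 + ‖v‖ ^ 2) := by
        simpa [Fin.sum_univ_two] using
          Real.sum_mul_le_sqrt_mul_sqrt Finset.univ ![‖c‖, ‖d‖] ![‖u‖, ‖v‖]

lemma norm_mul_sub_mul_le_of_norm_sq_add_norm_sq_eq_one {R : Type*}
    [SeminormedCommRing R] {c d : R} (hcd : ‖c‖ ^ 2 + ‖d‖ ^ 2 = 1) (a b q : R) :
    ‖c * b - d * a‖ ≤ √(‖a - c * q‖ ^ 2 + ‖b - d * q‖ ^ 2) := by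
  have hcancel : c * b - d * a = c * (b - d * q) - d * (a - c * q) := by ring
  simpa [hcancel, hcd, add_comm (‖a - c * q‖ ^ 2)] using
    norm_mul_sub_mul_le_sqrt_mul_sqrt c d (b - d * q) (a - c * q)

theorem stmt_5 (S : Type*) (n₁ d₁ n₂ d₂ : S → ℂ)
    (hnorm : ∀ x : S, ‖n₂ x‖ ^ 2 + ‖d₂ x‖ ^ 2 = 1)
    (q : S → ℂ) :
    (⨆ x : S, ENNReal.ofReal
        (Real.sqrt (‖n₁ x - n₂ x * q x‖ ^ 2 +
          ‖d₁ x - d₂ x * q x‖ ^ 2))) ≥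
      ⨆ x : S, ENNReal.ofReal (‖n₂ x * d₁ x - d₂ x * n₁ x‖) :=
  iSup_mono fun x => ENNReal.ofReal_le_ofReal <|
    norm_mul_sub_mul_le_of_norm_sq_add_norm_sq_eq_one (hnorm x) (n₁ x) (d₁ x) (q x)
end

section
/- Let 1/√2 < r < 1 and let 0 < ρ < 1. Then there exists z ∈ ℂ with ρ < |z| < 1 such that r² e^{−2 Re((1+z)/(1−z))} − (1 − r²) = 0. Consequently, the function z ↦ r² e^{−2Re((1+z)/(1−z))} − (1−r²) is not invertible in the Banach algebra of bounded continuous functions on the annulus 𝔸_ρ = {z ∈ ℂ : ρ < |z| < 1}. -/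
/-!
Under the Cayley transform `z = (w - 1) / (w + 1)`, whose inverse is `φ`, the level set
`Re φ(z) = c` with `c > 0` is the image of the vertical line `Re w = c`. Along that line `z → 1`
as `Im w → ∞`, so the level set meets every annulus `ρ < ‖z‖ < 1`. The function vanishes exactly
where `Re φ(z) = log (r² / (1 - r²)) / 2`, which is positive precisely because `r² > 1/2`.
-/

open Complex

lemma norm_sub_one_lt_norm_add_one {w : ℂ} (hw : 0 < w.re) : ‖w - 1‖ < ‖w + 1‖ := by
  rw [← sq_lt_sq₀ (norm_nonneg _) (norm_nonneg _), ← normSq_eq_norm_sq, ← normSq_eq_norm_sq]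
  simp only [normSq_apply, sub_re, add_re, sub_im, add_im, one_re, one_im]
  nlinarith

lemma one_add_div_one_sub_cayley {w : ℂ} (hw : w + 1 ≠ 0) :
    (1 + (w - 1) / (w + 1)) / (1 - (w - 1) / (w + 1)) = w := by
  field_simp
  ring

lemma one_sub_cayley {w : ℂ} (hw : w + 1 ≠ 0) : 1 - (w - 1) / (w + 1) = 2 / (w + 1) := by
  field_simp
  ring

theorem exists_norm_mem_Ioo_re_one_add_div_one_sub_eq {c ρ : ℝ} (hc : 0 < c) (hρ : ρ < 1) :
    ∃ z : ℂ, ρ < ‖z‖ ∧ ‖z‖ < 1 ∧ ((1 + z) / (1 - z)).re = c := by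
  set y : ℝ := 4 / (1 - ρ)
  have hy : 0 < y := div_pos (by norm_num) (by linarith)
  set w : ℂ := c + y * I
  have hw_pos : 0 < w.re := by simpa [w] using hc
  have hw_im : (w + 1).im = y := by simp [w]
  have hw : w + 1 ≠ 0 := fun h ↦ by simp [h] at hw_im; linarith
  have hw_norm : y ≤ ‖w + 1‖ := hw_im ▸ (le_abs_self _).trans (abs_im_le_norm _)
  refine ⟨(w - 1) / (w + 1), ?_, ?_, by simp [w, one_add_div_one_sub_cayley hw]⟩
  · have h_dist : ‖1 - (w - 1) / (w + 1)‖ < 1 - ρ := by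
      rw [one_sub_cayley hw, norm_div, Complex.norm_ofNat]
      calc 2 / ‖w + 1‖ ≤ 2 / y := by gcongr
        _ = (1 - ρ) / 2 := by simp only [y]; field_simp; ring
        _ < 1 - ρ := by linarith
    have := norm_sub_norm_le (1 : ℂ) ((w - 1) / (w + 1))
    rw [norm_one] at this
    linarith
  · have hlt := norm_sub_one_lt_norm_add_one hw_pos
    rwa [norm_div, div_lt_one ((norm_nonneg _).trans_lt hlt)]

lemma one_lt_sq_div_one_sub_sq {r : ℝ} (hr1 : 1 / Real.sqrt 2 < r) (hr2 : r < 1) :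
    1 < r ^ 2 / (1 - r ^ 2) := by
  have h : (1 / Real.sqrt 2) ^ 2 < r ^ 2 := pow_lt_pow_left₀ hr1 (by positivity) two_ne_zero
  rw [div_pow, one_pow, Real.sq_sqrt zero_le_two] at h
  have hr0 : 0 < r := (by positivity : (0 : ℝ) < 1 / Real.sqrt 2).trans hr1
  rw [one_lt_div (by nlinarith)]
  linarith

lemma mul_exp_neg_log_div {a b : ℝ} (h : 0 < a / b) : a * Real.exp (-Real.log (a / b)) = b := by
  rw [Real.exp_neg, Real.exp_log h, inv_div, mul_div_cancel₀ _ (div_ne_zero_iff.mp h.ne').1]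

theorem stmt_13_general (r : ℝ) (hr1 : 1 / Real.sqrt 2 < r) (hr2 : r < 1)
    (ρ : ℝ) (hρ1 : ρ < 1) :
    -- the function (G₁*G₂)∘φ has a zero in the annulus ρ < |z| < 1
    (∃ z : ℂ, ρ < ‖z‖ ∧ ‖z‖ < 1 ∧
      r ^ 2 * Real.exp (-2 * ((1 + z) / (1 - z)).re) - (1 - r ^ 2) = 0) ∧
    -- consequently it is not invertible in the Banach algebra of bounded
    -- continuous functions on the annulus 𝔸_ρ
    ¬ ∃ g : BoundedContinuousFunction {z : ℂ // ρ < ‖z‖ ∧ ‖z‖ < 1} ℂ,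
        ∀ z : {z : ℂ // ρ < ‖z‖ ∧ ‖z‖ < 1},
          ((r ^ 2 * Real.exp (-2 * ((1 + (z : ℂ)) / (1 - (z : ℂ))).re) - (1 - r ^ 2) : ℝ) : ℂ) *
              g z = 1 := by
  have hratio := one_lt_sq_div_one_sub_sq hr1 hr2
  have hc : 0 < Real.log (r ^ 2 / (1 - r ^ 2)) / 2 := half_pos (Real.log_pos hratio)
  obtain ⟨z, hρz, hz1, hre⟩ := exists_norm_mem_Ioo_re_one_add_div_one_sub_eq hc hρ1
  have hzero : r ^ 2 * Real.exp (-2 * ((1 + z) / (1 - z)).re) - (1 - r ^ 2) = 0 := by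
    rw [hre, show ∀ t : ℝ, -2 * (t / 2) = -t by intro t; ring,
      mul_exp_neg_log_div (one_pos.trans hratio), sub_self]
  refine ⟨⟨z, hρz, hz1, hzero⟩, fun ⟨g, hg⟩ ↦ ?_⟩
  have h := hg ⟨z, hρz, hz1⟩
  simp only [hzero, ofReal_zero, zero_mul, zero_ne_one] at h

theorem stmt_13 (r : ℝ) (hr1 : 1 / Real.sqrt 2 < r) (hr2 : r < 1)
    (ρ : ℝ) (hρ0 : 0 < ρ) (hρ1 : ρ < 1) :
    -- the function (G₁*G₂)∘φ has a zero in the annulus ρ < |z| < 1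
    (∃ z : ℂ, ρ < ‖z‖ ∧ ‖z‖ < 1 ∧
      r ^ 2 * Real.exp (-2 * ((1 + z) / (1 - z)).re) - (1 - r ^ 2) = 0) ∧
    -- consequently it is not invertible in the Banach algebra of bounded
    -- continuous functions on the annulus 𝔸_ρ
    ¬ ∃ g : BoundedContinuousFunction {z : ℂ // ρ < ‖z‖ ∧ ‖z‖ < 1} ℂ,
        ∀ z : {z : ℂ // ρ < ‖z‖ ∧ ‖z‖ < 1},
          ((r ^ 2 * Real.exp (-2 * ((1 + (z : ℂ)) / (1 - (z : ℂ))).re) - (1 - r ^ 2) : ℝ) : ℂ) *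
              g z = 1 :=
  stmt_13_general r hr1 hr2 ρ hρ1
end
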